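/- arXiv:2103.00451 — 2 statements merged into one kernel-verified Lean document; each statement's English description precedes it below -/
import Mathlib

section
/- Let G be a finite simple graph with a nonempty vertex set V, and for a nonempty vertex set S let ρ(S) = 2·e(S)/|S| be the average degree of the subgraph induced by S. Consider the greedy peeling process that produces a sequence of vertex sets V = S₀ ⊋ S₁ ⊋ ⋯ ⊋ S_{|V|-1}, where each S_{j+1} is obtained from S_j by removing a vertex of minimum degree in the subgraph induced by S_j. Then max_j ρ(S_j) ≥ ρ*/2, where ρ* = max{ρ(S) : ∅ ≠ S ⊆ V} is the maximum density over all nonempty induced subgraphs of G. -/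
open Finset

/-- Twice the number of edges of `G` with both endpoints in `S`,
i.e. the number of *ordered* adjacent pairs inside `S`. -/
def twiceEdgeCount {V : Type*} [DecidableEq V] (G : SimpleGraph V)
    [DecidableRel G.Adj] (S : Finset V) : ℕ :=
  ((S ×ˢ S).filter fun p => G.Adj p.1 p.2).card

/-- The density `ρ(S) = 2·e(S)/|S|` of the subgraph of `G` induced by `S`:
the average degree of the induced subgraph. -/
noncomputable def density {V : Type*} [DecidableEq V] (G : SimpleGraph V)
    [DecidableRel G.Adj] (S : Finset V) : ℝ :=
  (twiceEdgeCount G S : ℝ) / (S.card : ℝ)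

/-- The degree of `v` in the subgraph of `G` induced by `S`. -/
def inducedDegree {V : Type*} [DecidableEq V] (G : SimpleGraph V)
    [DecidableRel G.Adj] (S : Finset V) (v : V) : ℕ :=
  (S.filter fun u => G.Adj v u).card

/-!
Let `B` be a densest nonempty subset of `A`, and let `S J` be the last set of the peeling
sequence that still contains `B`. Unless `S J` is the final singleton (then `B = S J`),
the vertex `v` peeled from `S J` lies in `B`. Deleting `v` does not make `B` denser, which
forces `2 · deg_B v ≥ ρ(B)`; and since `v` has minimum degree in `S J`,
`ρ(S J) ≥ deg_{S J} v ≥ deg_B v`.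
-/

section Density

variable {V : Type*} [DecidableEq V] (G : SimpleGraph V) [DecidableRel G.Adj]

theorem twiceEdgeCount_eq_sum_inducedDegree (S : Finset V) :
    twiceEdgeCount G S = ∑ v ∈ S, inducedDegree G S v := by
  unfold twiceEdgeCount inducedDegree
  rw [card_filter, sum_product]
  exact sum_congr rfl fun v _ => by rw [card_filter]

theorem density_mul_card (S : Finset V) : density G S * S.card = twiceEdgeCount G S := by
  rcases S.eq_empty_or_nonempty with rfl | hS
  · simp [twiceEdgeCount]
  · exact div_mul_cancel₀ _ (by exact_mod_cast hS.card_ne_zero)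

theorem density_nonneg (S : Finset V) : 0 ≤ density G S :=
  div_nonneg (Nat.cast_nonneg _) (Nat.cast_nonneg _)

theorem inducedDegree_mono {A T : Finset V} (h : A ⊆ T) (v : V) :
    inducedDegree G A v ≤ inducedDegree G T v :=
  card_le_card (filter_subset_filter _ h)

theorem inducedDegree_erase_add {A : Finset V} {v : V} (hv : v ∈ A) (u : V) :
    inducedDegree G (A.erase v) u + (if G.Adj u v then 1 else 0) = inducedDegree G A u := by
  unfold inducedDegree
  conv_rhs => rw [← insert_erase hv]
  rw [filter_insert]
  split_ifs
  · rw [card_insert_of_notMem (by simp)]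
  · simp

theorem twiceEdgeCount_erase_add {A : Finset V} {v : V} (hv : v ∈ A) :
    twiceEdgeCount G (A.erase v) + 2 * inducedDegree G A v = twiceEdgeCount G A := by
  have hback : ∑ u ∈ A.erase v, (if G.Adj u v then 1 else 0) = inducedDegree G A v := by
    rw [← card_filter, inducedDegree, filter_erase,
      erase_eq_of_notMem (by simp)]
    simp only [G.adj_comm]
  rw [twiceEdgeCount_eq_sum_inducedDegree, twiceEdgeCount_eq_sum_inducedDegree,
    ← add_sum_erase A _ hv, ← sum_congr rfl fun u _ => inducedDegree_erase_add G hv u,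
    sum_add_distrib, hback]
  ring

theorem inducedDegree_le_density {T : Finset V} {v : V}
    (hmin : ∀ u ∈ T, inducedDegree G T v ≤ inducedDegree G T u) (hv : v ∈ T) :
    (inducedDegree G T v : ℝ) ≤ density G T := by
  have hsum : T.card * inducedDegree G T v ≤ twiceEdgeCount G T := by
    rw [twiceEdgeCount_eq_sum_inducedDegree]
    simpa using card_nsmul_le_sum T _ _ hmin
  have hcard : (0 : ℝ) < T.card := by exact_mod_cast card_pos.mpr ⟨v, hv⟩
  rw [← mul_le_mul_iff_left₀ hcard, density_mul_card, mul_comm]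
  exact_mod_cast hsum

theorem density_le_two_mul_inducedDegree {A : Finset V} {v : V} (hv : v ∈ A)
    (herase : density G (A.erase v) ≤ density G A) :
    density G A ≤ 2 * inducedDegree G A v := by
  have hsplit : (twiceEdgeCount G (A.erase v) : ℝ) + 2 * inducedDegree G A v
      = twiceEdgeCount G A := by exact_mod_cast twiceEdgeCount_erase_add G hv
  have hcard : ((A.erase v).card : ℝ) = A.card - 1 := by
    rw [card_erase_of_mem hv, Nat.cast_pred (card_pos.mpr ⟨v, hv⟩)]
  rw [← density_mul_card, ← density_mul_card, hcard] at hsplit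
  have hcard_nonneg : (0 : ℝ) ≤ A.card - 1 := by
    rw [← hcard]; exact Nat.cast_nonneg _
  linarith [mul_le_mul_of_nonneg_right herase hcard_nonneg]

def IsLocallyDensest (B : Finset V) : Prop :=
  ∀ v ∈ B, density G (B.erase v) ≤ density G B

theorem exists_isLocallyDensest_density_le {A : Finset V} (hA : A.Nonempty) :
    ∃ B : Finset V, B.Nonempty ∧ density G A ≤ density G B ∧ IsLocallyDensest G B := by
  obtain ⟨B, hBmem, hBmax⟩ :=
    exists_max_image (A.powerset.filter Finset.Nonempty) (density G) ⟨A, by simp [hA]⟩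
  simp only [mem_filter, mem_powerset] at hBmem hBmax
  refine ⟨B, hBmem.2, hBmax A ⟨subset_rfl, hA⟩, fun v _ => ?_⟩
  rcases (B.erase v).eq_empty_or_nonempty with hempty | hne
  · simpa [hempty, density] using density_nonneg G B
  · exact hBmax _ ⟨(erase_subset v B).trans hBmem.1, hne⟩

theorem density_le_two_mul_density_of_peel {T B : Finset V} {v : V} (hv : v ∈ T)
    (hmin : ∀ u ∈ T, inducedDegree G T v ≤ inducedDegree G T u)
    (hBT : B ⊆ T) (hBpeel : ¬ B ⊆ T.erase v)
    (hB : IsLocallyDensest G B) :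
    density G B ≤ 2 * density G T := by
  have hvB : v ∈ B := by
    by_contra hvB
    exact hBpeel (subset_erase.mpr ⟨hBT, hvB⟩)
  calc density G B ≤ 2 * inducedDegree G B v := density_le_two_mul_inducedDegree G hvB (hB v hvB)
    _ ≤ 2 * inducedDegree G T v := by gcongr; exact_mod_cast inducedDegree_mono G hBT v
    _ ≤ 2 * density G T := by gcongr; exact inducedDegree_le_density G hmin hv

end Density

theorem card_add_of_erase_steps {α : Type*} [DecidableEq α] {S : ℕ → Finset α} {n : ℕ}
    (hstep : ∀ j < n, ∃ v ∈ S j, S (j + 1) = (S j).erase v) :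
    ∀ j ≤ n, (S j).card + j = (S 0).card
  | 0, _ => rfl
  | j + 1, hj => by
    obtain ⟨v, hv, hS⟩ := hstep j hj
    have := card_add_of_erase_steps hstep j (by omega)
    rw [hS, card_erase_of_mem hv]
    have := card_pos.mpr ⟨v, hv⟩
    omega

theorem greedy_peeling_two_approx_general
    {V : Type*} [Fintype V] [DecidableEq V]
    (G : SimpleGraph V) [DecidableRel G.Adj]
    (S : ℕ → Finset V)
    (h0 : S 0 = Finset.univ)
    (hstep : ∀ j, j + 1 ≤ Fintype.card V - 1 →
      ∃ v ∈ S j,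
        (∀ u ∈ S j, inducedDegree G (S j) v ≤ inducedDegree G (S j) u) ∧
        S (j + 1) = (S j).erase v)
    (A : Finset V) (hA : A.Nonempty) :
    ∃ j ≤ Fintype.card V - 1, density G A / 2 ≤ density G (S j) := by
  obtain ⟨B, hBne, hAB, hB⟩ := exists_isLocallyDensest_density_le G hA
  set N := Fintype.card V - 1
  have hcard : (S N).card + N = Fintype.card V := by
    rw [card_add_of_erase_steps (fun j hj => (hstep j hj).imp fun _ ⟨hv, _, hS⟩ => ⟨hv, hS⟩)
      N le_rfl, h0, card_univ]
  set J := Nat.findGreatest (B ⊆ S ·) N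
  have hJN : J ≤ N := Nat.findGreatest_le N
  have hBJ : B ⊆ S J :=
    Nat.findGreatest_spec (P := (B ⊆ S ·)) (Nat.zero_le N) (h0 ▸ subset_univ B)
  suffices density G B ≤ 2 * density G (S J) from ⟨J, hJN, by linarith⟩
  rcases hJN.lt_or_eq with hJN | hJN
  · obtain ⟨v, hv, hmin, hS⟩ := hstep J hJN
    exact density_le_two_mul_density_of_peel G hv hmin hBJ (hS ▸
      Nat.findGreatest_is_greatest (Nat.lt_succ_self J) hJN) hB
  · rw [hJN] at hBJ ⊢
    have hBS : B = S N := eq_of_subset_of_card_le hBJ (by have := hBne.card_pos; omega)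
    rw [← hBS]
    linarith [density_nonneg G B]

/-- Greedy peeling is a 2-approximation for the densest subgraph.  If
`S 0 = V` and each `S (j+1)` (for `j + 1 ≤ |V| - 1`) is obtained from `S j`
by removing a vertex of minimum degree in the subgraph induced by `S j`,
then for every nonempty vertex subset `A` there is an index
`j ≤ |V| - 1` of the peeling sequence with `ρ(A)/2 ≤ ρ(S j)`, i.e.
`max_j ρ(S j) ≥ ρ*/2`. -/
theorem greedy_peeling_two_approx
    {V : Type*} [Fintype V] [DecidableEq V] [Nonempty V]
    (G : SimpleGraph V) [DecidableRel G.Adj]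
    (S : ℕ → Finset V)
    (h0 : S 0 = Finset.univ)
    (hstep : ∀ j, j + 1 ≤ Fintype.card V - 1 →
      ∃ v ∈ S j,
        (∀ u ∈ S j, inducedDegree G (S j) v ≤ inducedDegree G (S j) u) ∧
        S (j + 1) = (S j).erase v)
    (A : Finset V) (hA : A.Nonempty) :
    ∃ j ≤ Fintype.card V - 1, density G A / 2 ≤ density G (S j) :=
  greedy_peeling_two_approx_general G S h0 hstep A hA
end

section
/- Let T be a finite linearly ordered set (e.g., Fin n for n ≥ 1) and let A, B ⊆ T be nonempty subsets. If π is a permutation of T chosen uniformly at random, then the probability that min_{t∈A} π(t) = min_{t∈B} π(t) equals the Jaccard similarity |A ∩ B| / |A ∪ B|. -/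
/-!
For an injective `π`, the two min-hash values agree exactly when the minimiser of `π` on `A ∪ B`
lies in `A ∩ B`. Precomposing with the transposition of two points `t, t'` of `A ∪ B` exchanges the
permutations minimised at `t` with those minimised at `t'`, so every point of `A ∪ B` is the
minimiser for the same number `c` of permutations. Hence `|A ∩ B| * c` of the `|A ∪ B| * c`
permutations are collisions.
-/

open Finset

section MinHash

variable {α β : Type*} [LinearOrder β]

theorem IsMinOn.eq_of_injective {f : α → β} {s : Set α} {a b : α} (hf : Function.Injective f)
    (ha : IsMinOn f s a) (hb : IsMinOn f s b) (has : a ∈ s) (hbs : b ∈ s) : a = b :=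
  hf (le_antisymm (ha hbs) (hb has))

theorem Finset.inf'_eq_of_isMinOn {f : α → β} {s : Finset α} (hs : s.Nonempty) {a : α}
    (ha : a ∈ s) (hmin : IsMinOn f s a) : s.inf' hs f = f a :=
  le_antisymm (inf'_le f ha) (le_inf' hs f fun _ hx => isMinOn_iff.1 hmin _ hx)

theorem Finset.inf'_eq_inf'_iff_exists_isMinOn_union [DecidableEq α] {f : α → β}
    (hf : Function.Injective f) {A B : Finset α} (hA : A.Nonempty) (hB : B.Nonempty) :
    A.inf' hA f = B.inf' hB f ↔ ∃ t ∈ A ∩ B, IsMinOn f ↑(A ∪ B) t := by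
  constructor
  · intro h
    obtain ⟨a, ha, hfa⟩ := exists_mem_eq_inf' hA f
    obtain ⟨b, hb, hfb⟩ := exists_mem_eq_inf' hB f
    obtain rfl : a = b := hf (hfa.symm.trans (h.trans hfb))
    refine ⟨a, mem_inter.2 ⟨ha, hb⟩, isMinOn_iff.2 fun x hx => ?_⟩
    rcases mem_union.1 hx with hx | hx
    · exact hfa ▸ inf'_le f hx
    · exact hfb ▸ inf'_le f hx
  · rintro ⟨t, ht, hmin⟩
    rw [mem_inter] at ht
    rw [inf'_eq_of_isMinOn hA ht.1 (hmin.on_subset (by simp)),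
      inf'_eq_of_isMinOn hB ht.2 (hmin.on_subset (by simp))]

theorem isMinOn_swap_trans_iff [DecidableEq α] {e : α ≃ β} {s : Set α} {t t' : α}
    (ht : t ∈ s) (ht' : t' ∈ s) :
    IsMinOn ((Equiv.swap t t').trans e) s t ↔ IsMinOn e s t' := by
  have hswap : ∀ x ∈ s, Equiv.swap t t' x ∈ s := fun x hx => by
    rw [Equiv.swap_apply_def]; split_ifs <;> assumption
  simp only [isMinOn_iff, Equiv.trans_apply, Equiv.swap_apply_left]
  refine ⟨fun h x hx => ?_, fun h x hx => h _ (hswap x hx)⟩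
  simpa using h _ (hswap x hx)

variable [Fintype α] [Fintype β] [DecidableEq α] [DecidableEq β]

open Classical in
theorem card_filter_isMinOn_eq {s : Set α} {t t' : α} (ht : t ∈ s) (ht' : t' ∈ s) :
    #{e : α ≃ β | IsMinOn e s t} = #{e : α ≃ β | IsMinOn e s t'} := by
  refine card_nbij' (fun e => (Equiv.swap t t').trans e) (fun e => (Equiv.swap t t').trans e)
    (fun e he => ?_) (fun e he => ?_) (fun e _ => ?_) (fun e _ => ?_)
  · simp only [mem_coe, mem_filter, mem_univ, true_and] at he ⊢
    rwa [Equiv.swap_comm, isMinOn_swap_trans_iff ht' ht]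
  · simp only [mem_coe, mem_filter, mem_univ, true_and] at he ⊢
    rwa [isMinOn_swap_trans_iff ht ht']
  all_goals ext; simp

open Classical in
theorem card_filter_exists_mem_isMinOn {S U : Finset α} (hSU : S ⊆ U) {t₀ : α} (ht₀ : t₀ ∈ U) :
    #{e : α ≃ β | ∃ t ∈ S, IsMinOn e U t} = #S * #{e : α ≃ β | IsMinOn e U t₀} := by
  have hunion : ({e : α ≃ β | ∃ t ∈ S, IsMinOn e U t} : Finset (α ≃ β)) =
      S.biUnion fun t => {e : α ≃ β | IsMinOn e U t} := by
    ext; simp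
  rw [hunion, card_biUnion fun t ht t' ht' hne => disjoint_filter.2 fun e _ h h' =>
      hne (h.eq_of_injective e.injective h' (hSU ht) (hSU ht')),
    sum_congr rfl fun t ht => card_filter_isMinOn_eq (hSU ht) ht₀, sum_const, smul_eq_mul]

end MinHash

/-- **min-wise hashing.**
Let `T` be a finite linearly ordered set and `A, B ⊆ T` nonempty subsets.
For a uniformly random permutation `π` of `T`, the probability that
`min_{t∈A} π t = min_{t∈B} π t` equals the Jaccard similarity
`|A ∩ B| / |A ∪ B|`.  (The probability is expressed as the fraction of
permutations with equal min-hash values.) -/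
theorem minhash_collision_probability_eq_jaccard
    {T : Type*} [Fintype T] [LinearOrder T]
    (A B : Finset T) (hA : A.Nonempty) (hB : B.Nonempty) :
    ((Finset.univ.filter fun π : Equiv.Perm T =>
          A.inf' hA (fun t => π t) = B.inf' hB (fun t => π t)).card : ℝ) /
        (Fintype.card (Equiv.Perm T) : ℝ)
      = ((A ∩ B).card : ℝ) / ((A ∪ B).card : ℝ) := by
  classical
  obtain ⟨t₀, ht₀⟩ := hA.mono (subset_union_left (s₂ := B))
  set c := #{π : Equiv.Perm T | IsMinOn π ↑(A ∪ B) t₀}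
  have hcollide : #{π : Equiv.Perm T | A.inf' hA π = B.inf' hB π} = #(A ∩ B) * c := by
    rw [filter_congr fun π _ => inf'_eq_inf'_iff_exists_isMinOn_union π.injective hA hB]
    exact card_filter_exists_mem_isMinOn inter_subset_union ht₀
  have hall : Fintype.card (Equiv.Perm T) = #(A ∪ B) * c := by
    rw [← card_filter_exists_mem_isMinOn subset_rfl ht₀, filter_true_of_mem, card_univ]
    intro π _
    obtain ⟨t, ht, hmin⟩ := exists_min_image (A ∪ B) π ⟨t₀, ht₀⟩
    exact ⟨t, ht, isMinOn_iff.2 hmin⟩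
  have hc : (c : ℝ) ≠ 0 := by
    have := (Fintype.card_pos (α := Equiv.Perm T)).ne'
    rw [hall] at this
    exact_mod_cast right_ne_zero_of_mul this
  rw [hcollide, hall]
  push_cast
  exact mul_div_mul_right _ _ hc
end
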